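/- Let (P_t)_{t≥0} be a Markov semigroup on L²(μ) with invariant probability measure μ and generator ℒ with domain 𝒟(ℒ). Assume (H2'): there exist constants C ≥ 1 and λ_V > 0 such that Var_μ(P_t f) ≤ C e^{−2λ_V t} Var_μ(f) for all f ∈ L²(μ) and t ≥ 0. Then the iterated Poincaré inequality (H2) holds with constant λ_I = C^{−1/2} λ_V: for every f ∈ 𝒟(ℒ) with μ(f) = 0 one has ‖ℒf‖_{L²(μ)} ≥ C^{−1/2} λ_V ‖f‖_{L²(μ)}. -/

import Mathlib

open MeasureTheory ProbabilityTheory Filter ENNReal Topology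

noncomputable section

/-- The transition semigroup acting on functions: `P_t f (x) = E^x [f(X_t)]`. -/
def Pop {S : Type*} [MeasurableSpace S] (κ : ℝ → Kernel S S) (t : ℝ) (f : S → ℝ) : S → ℝ :=
  fun x => ∫ y, f y ∂(κ t x)

/-- `g = ℒ f` where `ℒ` is the infinitesimal generator of the semigroup in `L²(μ)`;
this also expresses that `f` belongs to the domain `𝒟(ℒ)`. -/
def IsGenerated {S : Type*} [MeasurableSpace S] (κ : ℝ → Kernel S S) (μ : Measure S)
    (f g : S → ℝ) : Prop :=
  MemLp f 2 μ ∧ MemLp g 2 μ ∧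
    Tendsto (fun t : ℝ => eLpNorm (fun x => (Pop κ t f x - f x) / t - g x) 2 μ)
      (𝓝[>] (0:ℝ)) (𝓝 0)

/-- The optimal transport cost `𝒯_p(ν₀, ν₁) = inf_{π ∈ 𝒞(ν₀,ν₁)} ∫ |x-y|^p dπ(x,y)`. -/
def Tcost {d : ℕ} (p : ℝ) (ν₀ ν₁ : Measure (EuclideanSpace ℝ (Fin d))) : ℝ≥0∞ :=
  ⨅ (π : Measure (EuclideanSpace ℝ (Fin d) × EuclideanSpace ℝ (Fin d)))
    (_ : π.map Prod.fst = ν₀) (_ : π.map Prod.snd = ν₁),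
      ∫⁻ z, ENNReal.ofReal (‖z.1 - z.2‖ ^ p) ∂π

/-!
For `f` in the domain with `μ f = 0`, put `φ t = ⟪P_t f, f⟫`. Its right derivative is
`⟪P_t ℒf, f⟫`, and since `ℒf` has mean zero as well, (H2') bounds it by
`√C e^{-λ_V t} ‖ℒf‖ ‖f‖`. As `φ t → 0`, integrating over `[0, ∞)` gives
`‖f‖² = φ 0 ≤ √C ‖ℒf‖ ‖f‖ / λ_V`.
-/

open Set

section

variable {S : Type*} [MeasurableSpace S] {μ : Measure S}

lemma abs_integral_mul_le_of_memLp_two {u v : S → ℝ} (hu : MemLp u 2 μ) (hv : MemLp v 2 μ) :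
    |∫ x, u x * v x ∂μ| ≤ (eLpNorm u 2 μ).toReal * (eLpNorm v 2 μ).toReal := by
  have h : ∫ x, u x * v x ∂μ = inner ℝ (hu.toLp u) (hv.toLp v) := by
    rw [L2.inner_def]
    refine integral_congr_ae ?_
    filter_upwards [hu.coeFn_toLp, hv.coeFn_toLp] with x hux hvx
    simp [hux, hvx, mul_comm]
  rw [h, ← Lp.norm_toLp u hu, ← Lp.norm_toLp v hv]
  exact abs_real_inner_le_norm _ _

lemma integral_sq_eq_of_memLp_two {u : S → ℝ} (hu : MemLp u 2 μ) :
    ∫ x, u x ^ 2 ∂μ = (eLpNorm u 2 μ).toReal ^ 2 := by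
  have h : ∫ x, u x ^ 2 ∂μ = inner ℝ (hu.toLp u) (hu.toLp u) := by
    rw [L2.inner_def]
    refine integral_congr_ae ?_
    filter_upwards [hu.coeFn_toLp] with x hux
    simp [hux, sq]
  rw [h, ← Lp.norm_toLp u hu, real_inner_self_eq_norm_sq]

lemma integral_sub_div_sub {a b c : S → ℝ} (ha : Integrable a μ) (hb : Integrable b μ)
    (hc : Integrable c μ) (s : ℝ) :
    ∫ x, (a x - b x) / s - c x ∂μ = (∫ x, a x ∂μ - ∫ x, b x ∂μ) / s - ∫ x, c x ∂μ := by
  rw [integral_sub (f := fun x => (a x - b x) / s) ((ha.sub hb).div_const s) hc, integral_div,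
    integral_sub ha hb]

lemma MeasureTheory.enorm_integral_le_eLpNorm [IsProbabilityMeasure μ] {p : ℝ≥0∞} {f : S → ℝ}
    (hp : 1 ≤ p) (hf : AEStronglyMeasurable f μ) : ‖∫ x, f x ∂μ‖ₑ ≤ eLpNorm f p μ :=
  calc ‖∫ x, f x ∂μ‖ₑ ≤ eLpNorm f 1 μ := by
        rw [eLpNorm_one_eq_lintegral_enorm]; exact enorm_integral_le_lintegral_enorm f
    _ ≤ eLpNorm f p μ := eLpNorm_le_eLpNorm_of_exponent_le hp hf

end

lemma MeasureTheory.Measure.integral_bind_kernel {α β : Type*} [MeasurableSpace α]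
    [MeasurableSpace β] {μ : Measure α} {κ : Kernel α β} {f : β → ℝ}
    (hf : Integrable f (μ.bind κ)) :
    ∫ y, f y ∂(μ.bind κ) = ∫ x, ∫ y, f y ∂(κ x) ∂μ := by
  rw [Measure.comp_eq_comp_const_apply] at hf ⊢
  simpa using Kernel.integral_comp hf

lemma MeasureTheory.AEStronglyMeasurable.integral_kernel_bind {α β : Type*} [MeasurableSpace α]
    [MeasurableSpace β] {μ : Measure α} {κ : Kernel α β} {f : β → ℝ}
    (hf : AEStronglyMeasurable f (μ.bind κ)) :
    AEStronglyMeasurable (fun x => ∫ y, f y ∂(κ x)) μ := by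
  rw [Measure.comp_eq_comp_const_apply] at hf
  simpa using hf.integral_kernel_comp

namespace Pop

variable {S : Type*} [MeasurableSpace S] {κ : ℝ → Kernel S S} {μ : Measure S} {s t : ℝ}
  {f g : S → ℝ}

lemma ae_integrable (hinv : μ.bind (κ t) = μ) (hf : Integrable f μ) :
    ∀ᵐ x ∂μ, Integrable f (κ t x) :=
  Measure.ae_integrable_of_integrable_comp (by rwa [hinv])

lemma congr_ae (hinv : μ.bind (κ t) = μ) (h : f =ᵐ[μ] g) : Pop κ t f =ᵐ[μ] Pop κ t g := by
  have h' : f =ᵐ[μ.bind (κ t)] g := by rwa [hinv]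
  filter_upwards [Measure.ae_ae_of_ae_comp h'] with x hx using integral_congr_ae hx

lemma integral_eq (hinv : μ.bind (κ t) = μ) (hf : Integrable f μ) :
    ∫ x, Pop κ t f x ∂μ = ∫ x, f x ∂μ := by
  have h := Measure.integral_bind_kernel (f := f) (κ := κ t) (by rwa [hinv])
  rw [hinv] at h
  exact h.symm

lemma aestronglyMeasurable (hinv : μ.bind (κ t) = μ) (hf : AEStronglyMeasurable f μ) :
    AEStronglyMeasurable (Pop κ t f) μ :=
  AEStronglyMeasurable.integral_kernel_bind (by rwa [hinv])

lemma eLpNorm_le [IsMarkovKernel (κ t)] (hinv : μ.bind (κ t) = μ) {p : ℝ≥0∞} (hp : 1 ≤ p)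
    (hp_top : p ≠ ∞) (hf : AEStronglyMeasurable f μ) :
    eLpNorm (Pop κ t f) p μ ≤ eLpNorm f p μ := by
  have hp0 : p ≠ 0 := (one_pos.trans_le hp).ne'
  have hq : 0 < p.toReal := ENNReal.toReal_pos hp0 hp_top
  have hf' : AEStronglyMeasurable f (μ.bind (κ t)) := by rwa [hinv]
  rw [eLpNorm_eq_eLpNorm' hp0 hp_top, eLpNorm_eq_eLpNorm' hp0 hp_top, eLpNorm'_eq_lintegral_enorm,
    eLpNorm'_eq_lintegral_enorm]
  gcongr ?_ ^ _
  calc ∫⁻ x, ‖Pop κ t f x‖ₑ ^ p.toReal ∂μ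
      ≤ ∫⁻ x, eLpNorm' f p.toReal (κ t x) ^ p.toReal ∂μ := by
        refine lintegral_mono_ae ?_
        filter_upwards [(κ t).aemeasurable.ae_of_bind hf'.aemeasurable] with x hx
        gcongr
        rw [← eLpNorm_eq_eLpNorm' hp0 hp_top]
        exact enorm_integral_le_eLpNorm hp hx.aestronglyMeasurable
    _ = ∫⁻ x, ∫⁻ y, ‖f y‖ₑ ^ p.toReal ∂(κ t x) ∂μ := by
        simp_rw [lintegral_rpow_enorm_eq_rpow_eLpNorm' hq]
    _ = ∫⁻ y, ‖f y‖ₑ ^ p.toReal ∂μ := by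
        rw [← Measure.lintegral_bind (κ t).aemeasurable (hf'.enorm.pow_const _), hinv]

lemma memLp [IsMarkovKernel (κ t)] (hinv : μ.bind (κ t) = μ) {p : ℝ≥0∞} (hp : 1 ≤ p)
    (hp_top : p ≠ ∞) (hf : MemLp f p μ) : MemLp (Pop κ t f) p μ :=
  ⟨aestronglyMeasurable hinv hf.1, (eLpNorm_le hinv hp hp_top hf.1).trans_lt hf.2⟩

lemma zero_ae_eq (hzero : ∀ x, κ 0 x = Measure.dirac x) (hf : AEStronglyMeasurable f μ) :
    Pop κ 0 f =ᵐ[μ] f := by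
  have hinv : μ.bind (κ 0) = μ := by
    rw [show ⇑(κ 0) = Measure.dirac from funext hzero, Measure.bind_dirac]
  filter_upwards [congr_ae hinv hf.ae_eq_mk, hf.ae_eq_mk] with x hPx hfx
  rw [hPx, hfx]
  simp only [Pop, hzero, integral_dirac' _ _ hf.stronglyMeasurable_mk]

lemma add_ae_eq_comp (hst : ∀ x, κ (s + t) x = (κ s x).bind (κ t))
    (hinv : μ.bind (κ (s + t)) = μ) (hf : Integrable f μ) :
    Pop κ (s + t) f =ᵐ[μ] Pop κ s (Pop κ t f) := by
  filter_upwards [ae_integrable hinv hf] with x hx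
  rw [hst x] at hx
  simpa only [Pop, hst x] using Measure.integral_bind_kernel hx

lemma toReal_eLpNorm_le_of_variance_le [IsFiniteMeasure μ] [IsMarkovKernel (κ t)] {C c : ℝ}
    {u : S → ℝ} (hinv : μ.bind (κ t) = μ)
    (hvar : ∫ x, (Pop κ t u x - ∫ y, Pop κ t u y ∂μ) ^ 2 ∂μ ≤
      C * Real.exp (-(2 * c * t)) * ∫ x, (u x - ∫ y, u y ∂μ) ^ 2 ∂μ)
    (hu : MemLp u 2 μ) (hu0 : ∫ x, u x ∂μ = 0) :
    (eLpNorm (Pop κ t u) 2 μ).toReal ≤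
      Real.sqrt C * Real.exp (-(c * t)) * (eLpNorm u 2 μ).toReal := by
  rw [integral_eq hinv (hu.integrable one_le_two), hu0] at hvar
  simp only [sub_zero] at hvar
  rw [integral_sq_eq_of_memLp_two (memLp hinv one_le_two ENNReal.ofNat_ne_top hu),
    integral_sq_eq_of_memLp_two hu] at hvar
  have hexp : Real.exp (-(2 * c * t)) = Real.exp (-(c * t)) ^ 2 := by
    rw [← Real.exp_nat_mul]; ring_nf
  calc (eLpNorm (Pop κ t u) 2 μ).toReal
      = Real.sqrt ((eLpNorm (Pop κ t u) 2 μ).toReal ^ 2) := (Real.sqrt_sq toReal_nonneg).symm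
    _ ≤ Real.sqrt (C * Real.exp (-(2 * c * t)) * (eLpNorm u 2 μ).toReal ^ 2) :=
        Real.sqrt_le_sqrt hvar
    _ = Real.sqrt C * Real.exp (-(c * t)) * (eLpNorm u 2 μ).toReal := by
        rw [hexp, Real.sqrt_mul' _ (sq_nonneg _), Real.sqrt_mul' _ (sq_nonneg _),
          Real.sqrt_sq (Real.exp_pos _).le, Real.sqrt_sq toReal_nonneg]

end Pop

lemma hasDerivWithinAt_Ici_of_abs_slope_sub_le {φ ε : ℝ → ℝ} {a t : ℝ}
    (hε : Tendsto ε (𝓝[>] 0) (𝓝 0)) (h : ∀ s > 0, |(φ (t + s) - φ t) / s - a| ≤ ε s) :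
    HasDerivWithinAt φ a (Ici t) t := by
  rw [hasDerivWithinAt_iff_tendsto_slope, Ici_sdiff_left, tendsto_iff_dist_tendsto_zero]
  have hshift : Tendsto (fun u => u - t) (𝓝[>] t) (𝓝[>] 0) := by
    refine tendsto_nhdsWithin_iff.2 ⟨?_, ?_⟩
    · simpa using ((continuous_sub_right t).tendsto t).mono_left nhdsWithin_le_nhds
    · filter_upwards [self_mem_nhdsWithin] with u (hu : t < u) using sub_pos.2 hu
  refine squeeze_zero' (Eventually.of_forall fun _ => dist_nonneg) ?_ (hε.comp hshift)
  filter_upwards [self_mem_nhdsWithin] with u (hu : t < u)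
  simpa [slope_def_field, Real.dist_eq] using h (u - t) (sub_pos.2 hu)

lemma continuousOn_Ici_of_abs_slope_sub_le {φ ψ ε : ℝ → ℝ} {a M : ℝ}
    (hε : Tendsto ε (𝓝[>] 0) (𝓝 0)) (hψ : ∀ t ≥ a, |ψ t| ≤ M)
    (h : ∀ t ≥ a, ∀ s > 0, |(φ (t + s) - φ t) / s - ψ t| ≤ ε s) :
    ContinuousOn φ (Ici a) := by
  have hstep : ∀ t ≥ a, ∀ s > 0, |φ (t + s) - φ t| ≤ s * (M + ε s) := by
    intro t ht s hs
    calc |φ (t + s) - φ t| = s * |(φ (t + s) - φ t) / s| := by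
          rw [abs_div, abs_of_pos hs]; field_simp
      _ ≤ s * (M + ε s) := by
          gcongr
          linarith [hψ t ht, h t ht s hs, abs_sub_abs_le_abs_sub ((φ (t + s) - φ t) / s) (ψ t)]
  have hω : Tendsto (fun s => s * (M + ε s)) (𝓝[>] 0) (𝓝 0) := by
    simpa using (tendsto_nhdsWithin_of_tendsto_nhds tendsto_id).mul
      (tendsto_const_nhds (x := M) |>.add hε)
  have hsmall : ∀ r > 0, ∃ δ > 0, ∀ u ≥ a, ∀ v, u < v → v - u < δ → |φ v - φ u| < r := by
    intro r hr
    obtain ⟨δ, hδ, hδω⟩ := Metric.tendsto_nhdsWithin_nhds.1 hω r hr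
    refine ⟨δ, hδ, fun u hu v huv hvu => ?_⟩
    have hpos : (0 : ℝ) < v - u := sub_pos.2 huv
    have := hδω (x := v - u) hpos (by rwa [Real.dist_eq, sub_zero, abs_of_pos hpos])
    rw [Real.dist_eq, sub_zero] at this
    calc |φ v - φ u| = |φ (u + (v - u)) - φ u| := by rw [add_sub_cancel]
      _ ≤ (v - u) * (M + ε (v - u)) := hstep u hu _ hpos
      _ ≤ |(v - u) * (M + ε (v - u))| := le_abs_self _
      _ < r := this
  intro t (ht : a ≤ t)
  rw [Metric.continuousWithinAt_iff]
  intro r hr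
  obtain ⟨δ, hδ, hφ⟩ := hsmall r hr
  refine ⟨δ, hδ, fun {u} (hu : a ≤ u) hut => ?_⟩
  rw [Real.dist_eq] at hut ⊢
  rcases lt_trichotomy u t with hlt | rfl | hgt
  · rw [abs_sub_comm]
    exact hφ u hu t hlt (by rw [abs_sub_comm] at hut; exact (le_abs_self _).trans_lt hut)
  · simpa using hr
  · exact hφ t ht u hgt ((le_abs_self _).trans_lt hut)

lemma abs_le_div_of_hasDerivWithinAt_Ici_of_abs_le_exp {φ ψ : ℝ → ℝ} {K c : ℝ} (hc : 0 < c)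
    (hφ : ContinuousOn φ (Ici 0)) (hderiv : ∀ t ≥ 0, HasDerivWithinAt φ (ψ t) (Ici t) t)
    (hψ : ∀ t ≥ 0, |ψ t| ≤ K * Real.exp (-(c * t))) (hlim : Tendsto φ atTop (𝓝 0)) :
    |φ 0| ≤ K / c := by
  have hB : ∀ t, HasDerivAt (fun r => K / c * (1 - Real.exp (-(c * r))))
      (K * Real.exp (-(c * t))) t := by
    intro t
    have hlin : HasDerivAt (fun r => -(c * r)) (-c) t := by
      simpa using ((hasDerivAt_id t).const_mul c).fun_neg
    exact ((hlin.exp.const_sub 1).const_mul (K / c)).congr_deriv (by field_simp)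
  have hbound : ∀ T ≥ 0, |φ T - φ 0| ≤ K / c * (1 - Real.exp (-(c * T))) := fun T hT =>
    image_norm_le_of_norm_deriv_right_le_deriv_boundary (f := fun r => φ r - φ 0)
      ((hφ.mono Icc_subset_Ici_self).sub continuousOn_const)
      (fun t ht => (hderiv t ht.1).sub_const _) (by simp) hB
      (fun t ht => hψ t ht.1) ⟨hT, le_rfl⟩
  have hexp : Tendsto (fun T => Real.exp (-(c * T))) atTop (𝓝 0) :=
    Real.tendsto_exp_atBot.comp (tendsto_neg_atTop_atBot.comp (tendsto_id.const_mul_atTop hc))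
  refine le_of_tendsto_of_tendsto (by simpa using (hlim.sub_const (φ 0)).abs) ?_
    (eventually_ge_atTop 0 |>.mono hbound)
  simpa using (hexp.const_sub 1).const_mul (K / c)

namespace IsGenerated

variable {S : Type*} [MeasurableSpace S] {κ : ℝ → Kernel S S} {μ : Measure S}
  [∀ t, IsMarkovKernel (κ t)] {f g : S → ℝ}

lemma integral_eq_zero [IsProbabilityMeasure μ] (hinv : ∀ t ≥ 0, μ.bind (κ t) = μ)
    (h : IsGenerated κ μ f g) : ∫ x, g x ∂μ = 0 := by
  obtain ⟨hf, hg, hD⟩ := h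
  have hbound : ∀ s > 0,
      ‖∫ x, g x ∂μ‖ₑ ≤ eLpNorm (fun x => (Pop κ s f x - f x) / s - g x) 2 μ := by
    intro s hs
    have hPs := Pop.memLp (hinv s hs.le) one_le_two ENNReal.ofNat_ne_top hf
    have hmean : ∫ x, (Pop κ s f x - f x) / s - g x ∂μ = -∫ x, g x ∂μ := by
      rw [integral_sub_div_sub (hPs.integrable one_le_two) (hf.integrable one_le_two)
        (hg.integrable one_le_two), Pop.integral_eq (hinv s hs.le) (hf.integrable one_le_two)]
      simp
    rw [← enorm_neg, ← hmean]
    exact enorm_integral_le_eLpNorm one_le_two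
      (((hPs.sub hf).mul_const s⁻¹).sub hg).aestronglyMeasurable
  have hzero : ‖∫ x, g x ∂μ‖ₑ ≤ 0 :=
    ge_of_tendsto hD (eventually_nhdsWithin_of_forall fun s (hs : 0 < s) => hbound s hs)
  simpa using hzero

lemma abs_slope_sub_le [IsFiniteMeasure μ]
    (hcomp : ∀ s t : ℝ, 0 ≤ s → 0 ≤ t → ∀ x, κ (s + t) x = (κ s x).bind (κ t))
    (hinv : ∀ t ≥ 0, μ.bind (κ t) = μ) (h : IsGenerated κ μ f g) {t s : ℝ} (ht : 0 ≤ t)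
    (hs : 0 < s) :
    |(∫ x, Pop κ (t + s) f x * f x ∂μ - ∫ x, Pop κ t f x * f x ∂μ) / s
        - ∫ x, Pop κ t g x * f x ∂μ| ≤
      (eLpNorm (fun x => (Pop κ s f x - f x) / s - g x) 2 μ).toReal * (eLpNorm f 2 μ).toReal := by
  obtain ⟨hf, hg, -⟩ := h
  set D := fun x => (Pop κ s f x - f x) / s - g x
  have hmemLp {r : ℝ} (hr : 0 ≤ r) {u : S → ℝ} (hu : MemLp u 2 μ) : MemLp (Pop κ r u) 2 μ :=
    Pop.memLp (hinv r hr) one_le_two ENNReal.ofNat_ne_top hu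
  have hPs := hmemLp hs.le hf
  have hD : MemLp D 2 μ := ((hPs.sub hf).mul_const s⁻¹).sub hg
  have hPD : Pop κ t D =ᵐ[μ] fun x => (Pop κ (t + s) f x - Pop κ t f x) / s - Pop κ t g x := by
    filter_upwards [Pop.ae_integrable (hinv t ht) (hPs.integrable one_le_two),
      Pop.ae_integrable (hinv t ht) (hf.integrable one_le_two),
      Pop.ae_integrable (hinv t ht) (hg.integrable one_le_two),
      Pop.add_ae_eq_comp (hcomp t s ht hs.le) (hinv (t + s) (by positivity))
        (hf.integrable one_le_two)] with x hPsx hfx hgx hcompx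
    rw [hcompx]
    exact integral_sub_div_sub hPsx hfx hgx s
  have hslope : (∫ x, Pop κ (t + s) f x * f x ∂μ - ∫ x, Pop κ t f x * f x ∂μ) / s
      - ∫ x, Pop κ t g x * f x ∂μ = ∫ x, Pop κ t D x * f x ∂μ := by
    have hint {u : S → ℝ} (hu : MemLp u 2 μ) : Integrable (fun x => u x * f x) μ :=
      hu.integrable_mul hf
    rw [← integral_sub_div_sub (hint (hmemLp (by positivity) hf)) (hint (hmemLp ht hf))
      (hint (hmemLp ht hg))]
    refine integral_congr_ae ?_
    filter_upwards [hPD] with x hx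
    rw [hx]
    ring
  rw [hslope]
  calc |∫ x, Pop κ t D x * f x ∂μ|
      ≤ (eLpNorm (Pop κ t D) 2 μ).toReal * (eLpNorm f 2 μ).toReal :=
        abs_integral_mul_le_of_memLp_two (hmemLp ht hD) hf
    _ ≤ (eLpNorm D 2 μ).toReal * (eLpNorm f 2 μ).toReal := by
        gcongr
        · exact hD.2.ne
        · exact Pop.eLpNorm_le (hinv t ht) one_le_two ENNReal.ofNat_ne_top hD.1

theorem mul_toReal_eLpNorm_le [IsProbabilityMeasure μ] (hzero : ∀ x, κ 0 x = Measure.dirac x)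
    (hcomp : ∀ s t : ℝ, 0 ≤ s → 0 ≤ t → ∀ x, κ (s + t) x = (κ s x).bind (κ t))
    (hinv : ∀ t ≥ 0, μ.bind (κ t) = μ) {C c : ℝ} (hc : 0 < c)
    (hdecay : ∀ u : S → ℝ, MemLp u 2 μ → ∀ t : ℝ, 0 ≤ t →
      ∫ x, (Pop κ t u x - ∫ y, Pop κ t u y ∂μ) ^ 2 ∂μ ≤
        C * Real.exp (-(2 * c * t)) * ∫ x, (u x - ∫ y, u y ∂μ) ^ 2 ∂μ)
    (h : IsGenerated κ μ f g) (hf0 : ∫ x, f x ∂μ = 0) :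
    c * (eLpNorm f 2 μ).toReal ≤ Real.sqrt C * (eLpNorm g 2 μ).toReal := by
  set Nf := (eLpNorm f 2 μ).toReal
  have hpair {u : S → ℝ} (hu : MemLp u 2 μ) (hu0 : ∫ x, u x ∂μ = 0) (t : ℝ) (ht : t ≥ 0) :
      |∫ x, Pop κ t u x * f x ∂μ| ≤
        Real.sqrt C * (eLpNorm u 2 μ).toReal * Nf * Real.exp (-(c * t)) :=
    calc |∫ x, Pop κ t u x * f x ∂μ| ≤ (eLpNorm (Pop κ t u) 2 μ).toReal * Nf :=
          abs_integral_mul_le_of_memLp_two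
            (Pop.memLp (hinv t ht) one_le_two ENNReal.ofNat_ne_top hu) h.1
      _ ≤ (Real.sqrt C * Real.exp (-(c * t)) * (eLpNorm u 2 μ).toReal) * Nf := by
          gcongr
          exact Pop.toReal_eLpNorm_le_of_variance_le (hinv t ht) (hdecay u hu t ht) hu hu0
      _ = _ := by ring
  have hψ := hpair h.2.1 (h.integral_eq_zero hinv)
  have hε : Tendsto (fun s => (eLpNorm (fun x => (Pop κ s f x - f x) / s - g x) 2 μ).toReal * Nf)
      (𝓝[>] 0) (𝓝 0) := by
    simpa using ((ENNReal.tendsto_toReal zero_ne_top).comp h.2.2).mul_const Nf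
  have hslope := fun t (ht : t ≥ 0) s (hs : s > 0) => h.abs_slope_sub_le hcomp hinv ht hs
  have hcont := continuousOn_Ici_of_abs_slope_sub_le (φ := fun t => ∫ x, Pop κ t f x * f x ∂μ)
    hε (fun t ht => (hψ t ht).trans (mul_le_of_le_one_right (by positivity)
      (Real.exp_le_one_iff.2 (neg_nonpos.2 (mul_nonneg hc.le ht))))) hslope
  have hlim : Tendsto (fun T => ∫ x, Pop κ T f x * f x ∂μ) atTop (𝓝 0) := by
    refine squeeze_zero_norm' ((eventually_ge_atTop 0).mono fun T hT => hpair h.1 hf0 T hT) ?_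
    simpa using (Real.tendsto_exp_atBot.comp (tendsto_neg_atTop_atBot.comp
      (tendsto_id.const_mul_atTop hc))).const_mul (Real.sqrt C * Nf * Nf)
  have hφ0 : ∫ x, Pop κ 0 f x * f x ∂μ = Nf ^ 2 := by
    rw [← integral_sq_eq_of_memLp_two h.1]
    refine integral_congr_ae ?_
    filter_upwards [Pop.zero_ae_eq hzero h.1.1] with x hx
    rw [hx, sq]
  have key := abs_le_div_of_hasDerivWithinAt_Ici_of_abs_le_exp hc hcont
    (fun t ht => hasDerivWithinAt_Ici_of_abs_slope_sub_le hε (hslope t ht)) hψ hlim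
  rw [hφ0, abs_of_nonneg (sq_nonneg _), le_div_iff₀ hc] at key
  rcases (toReal_nonneg : 0 ≤ Nf).eq_or_lt with hNf | hNf
  · rw [show Nf = 0 from hNf.symm, mul_zero]
    positivity
  · exact le_of_mul_le_mul_right (by nlinarith) hNf

end IsGenerated

theorem iterated_poincare_of_variance_decay_general
    {d : ℕ} (κ : ℝ → Kernel (EuclideanSpace ℝ (Fin d)) (EuclideanSpace ℝ (Fin d)))
    (hMark : ∀ t : ℝ, IsMarkovKernel (κ t))
    (hzero : ∀ x, κ 0 x = Measure.dirac x)
    (hcomp : ∀ s t : ℝ, 0 ≤ s → 0 ≤ t → ∀ x, κ (s + t) x = (κ s x).bind (κ t))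
    (μ : Measure (EuclideanSpace ℝ (Fin d))) [IsProbabilityMeasure μ]
    (hinv : ∀ t : ℝ, 0 ≤ t → μ.bind (κ t) = μ)
    (C lV : ℝ) (hlV : 0 < lV)
    (H2' : ∀ f : EuclideanSpace ℝ (Fin d) → ℝ, MemLp f 2 μ → ∀ t : ℝ, 0 ≤ t →
      ∫ x, (Pop κ t f x - ∫ y, Pop κ t f y ∂μ) ^ 2 ∂μ ≤
        C * Real.exp (-(2 * lV * t)) * ∫ x, (f x - ∫ y, f y ∂μ) ^ 2 ∂μ) :
    ∀ f g : EuclideanSpace ℝ (Fin d) → ℝ, IsGenerated κ μ f g → ∫ x, f x ∂μ = 0 →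
      ENNReal.ofReal (lV / Real.sqrt C) * eLpNorm f 2 μ ≤ eLpNorm g 2 μ := by
  intro f g h hf0
  have hmain := h.mul_toReal_eLpNorm_le hzero hcomp hinv hlV H2' hf0
  rw [← ofReal_toReal h.1.2.ne, ← ofReal_toReal h.2.1.2.ne, ← ofReal_mul (by positivity)]
  refine ofReal_le_ofReal ?_
  rw [div_mul_eq_mul_div]
  exact div_le_of_le_mul₀ (Real.sqrt_nonneg C) toReal_nonneg (by linarith)

/-- **(H2′) implies (H2).**  If a Markov semigroup with invariant probability measure `μ`
satisfies the exponential variance decay `Var_μ(P_t f) ≤ C e^{-2λ_V t} Var_μ(f)`, then the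
iterated Poincaré inequality holds with constant `λ_I = C^{-1/2} λ_V`: for every `f` in the
domain of the generator `ℒ` with `μ(f) = 0`, `‖ℒf‖_{L²(μ)} ≥ C^{-1/2} λ_V ‖f‖_{L²(μ)}`. -/
theorem iterated_poincare_of_variance_decay
    {d : ℕ} (κ : ℝ → Kernel (EuclideanSpace ℝ (Fin d)) (EuclideanSpace ℝ (Fin d)))
    (hMark : ∀ t : ℝ, IsMarkovKernel (κ t))
    (hzero : ∀ x, κ 0 x = Measure.dirac x)
    (hcomp : ∀ s t : ℝ, 0 ≤ s → 0 ≤ t → ∀ x, κ (s + t) x = (κ s x).bind (κ t))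
    (μ : Measure (EuclideanSpace ℝ (Fin d))) [IsProbabilityMeasure μ]
    (hinv : ∀ t : ℝ, 0 ≤ t → μ.bind (κ t) = μ)
    (C lV : ℝ) (hC : 1 ≤ C) (hlV : 0 < lV)
    (H2' : ∀ f : EuclideanSpace ℝ (Fin d) → ℝ, MemLp f 2 μ → ∀ t : ℝ, 0 ≤ t →
      ∫ x, (Pop κ t f x - ∫ y, Pop κ t f y ∂μ) ^ 2 ∂μ ≤
        C * Real.exp (-(2 * lV * t)) * ∫ x, (f x - ∫ y, f y ∂μ) ^ 2 ∂μ) :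
    ∀ f g : EuclideanSpace ℝ (Fin d) → ℝ, IsGenerated κ μ f g → ∫ x, f x ∂μ = 0 →
      ENNReal.ofReal (lV / Real.sqrt C) * eLpNorm f 2 μ ≤ eLpNorm g 2 μ :=
  iterated_poincare_of_variance_decay_general κ hMark hzero hcomp μ hinv C lV hlV H2'
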